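/- Fix a prime p and 0 < ε < 1/2 with ε rational. Suppose the closed interval [0, 1/2] is covered by a finite union of closed intervals, each of the form [c/(p^n+1), c/(p^n−1)] (type 1, with c, n positive integers) or [c/(p^n d) − ε/(p^n d²), c/(p^n d) + ε/(p^n d²)] (type 2, with c ≥ 0, d, n ≥ 0 integers, d ≥ 1). Then every real x satisfies liminf_{q→∞} q·|q|_p·‖qx‖ < ε. -/

import Mathlib

open Filter

noncomputable def padicAbs (p q : ℕ) : ℝ := (p : ℝ) ^ (-(padicValNat p q : ℤ))

noncomputable def distNearestInt (x : ℝ) : ℝ := |x - round x|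

noncomputable def plcQty (p : ℕ) (x : ℝ) (q : ℕ) : ℝ :=
  (q : ℝ) * padicAbs p q * distNearestInt ((q : ℝ) * x)

/-- Closure of a type-1 interval `I_1(c,n)`. -/
noncomputable def I1c (p c n : ℕ) : Set ℝ :=
  Set.Icc ((c : ℝ) / ((p : ℝ) ^ n + 1)) ((c : ℝ) / ((p : ℝ) ^ n - 1))

/-- Closure of a type-2 interval `I_2(c,d,n)`. -/
noncomputable def I2c (p : ℕ) (ε : ℝ) (c d n : ℕ) : Set ℝ :=
  Set.Icc ((c : ℝ) / ((p : ℝ) ^ n * d) - ε / ((p : ℝ) ^ n * (d : ℝ) ^ 2))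
    ((c : ℝ) / ((p : ℝ) ^ n * d) + ε / ((p : ℝ) ^ n * (d : ℝ) ^ 2))

/-!
Work in `ℝ/ℤ`, where `‖y‖` is the norm of the class of `y`. The cluster points of the orbit
`p ^ j • x` form a compact set, so one of them, `s`, has minimal norm `σ`. Taking
`q = p ^ (j + n) * b` along the indices where `p ^ j • x` is close to `s` gives
`liminf ≤ b ‖p ^ n b s‖`. If `σ = a / b` is rational then `b s = 0` and the liminf is `0`.
Otherwise `σ` lies in the interior of a covering interval, since all endpoints are rational.
In a type-1 interval `‖p ^ n s‖ ≤ |p ^ n σ - c| < σ`, although `p ^ n s` is again a cluster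
point: this contradicts minimality. In a type-2 interval `d ‖p ^ n d s‖ ≤ d |p ^ n d σ - c| < ε`.
-/

open Set

lemma Irrational.mem_Ioo_of_mem_Icc {σ : ℝ} (h : Irrational σ) {a b : ℚ}
    (hσ : σ ∈ Icc (a : ℝ) b) : σ ∈ Ioo (a : ℝ) b :=
  ⟨hσ.1.lt_of_ne (h.ne_rat a).symm, hσ.2.lt_of_ne (h.ne_rat b)⟩

lemma abs_mul_sub_lt_of_mem_Ioo {N c σ : ℝ} (hN : 1 < N)
    (h : σ ∈ Ioo (c / (N + 1)) (c / (N - 1))) : |N * σ - c| < σ := by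
  obtain ⟨h₁, h₂⟩ := h
  rw [div_lt_iff₀ (by linarith)] at h₁
  rw [lt_div_iff₀ (by linarith)] at h₂
  rw [abs_lt]
  constructor <;> linarith

lemma abs_mul_sub_lt_of_mem_Ioo_div {D c δ σ : ℝ} (hD : 0 < D)
    (h : σ ∈ Ioo (c / D - δ / D) (c / D + δ / D)) : |D * σ - c| < δ := by
  obtain ⟨h₁, h₂⟩ := h
  rw [← sub_div, div_lt_iff₀ hD] at h₁
  rw [← add_div, lt_div_iff₀ hD] at h₂
  rw [abs_lt]
  constructor <;> linarith

lemma exists_mapClusterPt_isMinOn {X ι α : Type*} [TopologicalSpace X] [CompactSpace X]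
    [LinearOrder α] [TopologicalSpace α] [ClosedIicTopology α] {F : Filter ι} [F.NeBot]
    (u : ι → X) {f : X → α} (hf : Continuous f) :
    ∃ s, MapClusterPt s F u ∧ IsMinOn f {t | MapClusterPt t F u} s :=
  isClosed_setOfPred_clusterPt.isCompact.exists_isMinOn (exists_clusterPt_of_compactSpace _)
    hf.continuousOn

namespace UnitAddCircle

lemma coe_norm_eq_or_eq_neg (s : UnitAddCircle) :
    ((‖s‖ : ℝ) : UnitAddCircle) = s ∨ ((‖s‖ : ℝ) : UnitAddCircle) = -s := by
  induction s using QuotientAddGroup.induction_on with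
  | H y =>
    have hy : ((y - round y : ℝ) : UnitAddCircle) = y := by simp
    rw [UnitAddCircle.norm_eq]
    rcases abs_choice (y - round y) with h | h <;> rw [h]
    · exact Or.inl hy
    · exact Or.inr (by rw [AddCircle.coe_neg, hy])

lemma norm_nsmul_eq_norm_coe_mul (k : ℕ) (s : UnitAddCircle) :
    ‖k • s‖ = ‖((k * ‖s‖ : ℝ) : UnitAddCircle)‖ := by
  have hk : ((k * ‖s‖ : ℝ) : UnitAddCircle) = k • ((‖s‖ : ℝ) : UnitAddCircle) := by simp
  rcases coe_norm_eq_or_eq_neg s with h | h <;> rw [hk, h]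
  rw [smul_neg, norm_neg]

lemma norm_coe_le_abs_sub_intCast (y : ℝ) (m : ℤ) : ‖(y : UnitAddCircle)‖ ≤ |y - m| := by
  have h : ((y - m : ℝ) : UnitAddCircle) = y := by simp
  exact h ▸ QuotientAddGroup.norm_mk_le_norm

end UnitAddCircle

lemma plcQty_nonneg (p : ℕ) (x : ℝ) (q : ℕ) : 0 ≤ plcQty p x q := by
  unfold plcQty padicAbs distNearestInt
  positivity

lemma plcQty_pow_mul_le {p : ℕ} (hp : p.Prime) (x : ℝ) (j : ℕ) {b : ℕ} (hb : b ≠ 0) :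
    plcQty p x (p ^ j * b) ≤ b * distNearestInt (p ^ j * b * x) := by
  have := Fact.mk hp
  have hv : j ≤ padicValNat p (p ^ j * b) :=
    (padicValNat_dvd_iff_le (mul_ne_zero (pow_ne_zero _ hp.ne_zero) hb)).1 (dvd_mul_right _ _)
  have habs : (p : ℝ) ^ j * padicAbs p (p ^ j * b) ≤ 1 := by
    rw [padicAbs, ← zpow_natCast, ← zpow_add₀ (by exact_mod_cast hp.ne_zero)]
    exact zpow_le_one_of_nonpos₀ (by exact_mod_cast hp.one_le) (by omega)
  unfold plcQty
  push_cast
  calc (p : ℝ) ^ j * b * padicAbs p (p ^ j * b) * distNearestInt (p ^ j * b * x)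
      = b * ((p : ℝ) ^ j * padicAbs p (p ^ j * b)) * distNearestInt (p ^ j * b * x) := by ring
    _ ≤ b * 1 * distNearestInt (p ^ j * b * x) := by gcongr; exact abs_nonneg _
    _ = b * distNearestInt (p ^ j * b * x) := by ring

noncomputable def circleOrbit (p : ℕ) (x : ℝ) (j : ℕ) : UnitAddCircle :=
  ((p ^ j * x : ℝ) : UnitAddCircle)

lemma circleOrbit_add (p : ℕ) (x : ℝ) (j n : ℕ) :
    circleOrbit p x (j + n) = p ^ n • circleOrbit p x j := by
  simp only [circleOrbit, ← AddCircle.coe_nsmul, nsmul_eq_mul]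
  push_cast
  ring_nf

section ClusterPoint

variable {p : ℕ} {x : ℝ} {s : UnitAddCircle}

lemma MapClusterPt.pow_nsmul_circleOrbit (hs : MapClusterPt s atTop (circleOrbit p x)) (n : ℕ) :
    MapClusterPt (p ^ n • s) atTop (circleOrbit p x) := by
  have h := hs.continuousAt_comp (continuous_nsmul (p ^ n)).continuousAt
  refine MapClusterPt.of_comp (tendsto_add_atTop_nat n) ?_
  convert h using 1
  funext j
  exact circleOrbit_add p x j n

lemma liminf_plcQty_le_of_mapClusterPt (hp : p.Prime)
    (hs : MapClusterPt s atTop (circleOrbit p x)) (n : ℕ) {b : ℕ} (hb : b ≠ 0) :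
    liminf (plcQty p x) atTop ≤ b * ‖(p ^ n * b) • s‖ := by
  set k := p ^ n * b
  have hcl : MapClusterPt (b * ‖k • s‖) atTop (fun j ↦ b * ‖k • circleOrbit p x j‖) :=
    hs.continuousAt_comp (f := fun t ↦ b * ‖k • t‖) (by fun_prop)
  have hbound (j : ℕ) : plcQty p x (p ^ (j + n) * b) ≤ b * ‖k • circleOrbit p x j‖ := by
    refine (plcQty_pow_mul_le hp x (j + n) hb).trans_eq ?_
    simp only [distNearestInt, ← UnitAddCircle.norm_eq, circleOrbit, k, ← AddCircle.coe_nsmul,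
      nsmul_eq_mul]
    push_cast
    ring_nf
  have htends : Tendsto (fun j ↦ p ^ (j + n) * b) atTop atTop := by
    refine tendsto_atTop_mono (fun j ↦ ?_) tendsto_id
    calc j ≤ p ^ j := (Nat.lt_pow_self hp.one_lt).le
      _ ≤ p ^ (j + n) := Nat.pow_le_pow_right hp.pos (by omega)
      _ ≤ p ^ (j + n) * b := Nat.le_mul_of_pos_right _ (by omega)
  refine le_of_forall_gt_imp_ge_of_dense fun C hC ↦ liminf_le_of_frequently_le ?_
    (isBoundedUnder_of ⟨0, plcQty_nonneg p x⟩)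
  exact htends.frequently ((hcl.frequently (eventually_lt_nhds hC)).mono
    fun j hj ↦ (hbound j).trans hj.le)

lemma liminf_plcQty_nonpos_of_norm_eq_ratCast (hp : p.Prime)
    (hs : MapClusterPt s atTop (circleOrbit p x)) {r : ℚ} (hr : ‖s‖ = r) :
    liminf (plcQty p x) atTop ≤ 0 := by
  have hnum : (r.den : ℝ) * r = r.num := by exact_mod_cast Rat.den_mul_eq_num r
  have hzero : ((r.num : ℝ) : UnitAddCircle) = 0 := by simp
  simpa [UnitAddCircle.norm_nsmul_eq_norm_coe_mul, hr, hnum, hzero] using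
    liminf_plcQty_le_of_mapClusterPt hp hs 0 r.den_ne_zero

lemma norm_notMem_I1c_of_isMinOn (hp : p.Prime) (hs : MapClusterPt s atTop (circleOrbit p x))
    (hmin : IsMinOn (‖·‖) {t | MapClusterPt t atTop (circleOrbit p x)} s)
    (hirr : Irrational ‖s‖) (c : ℕ) {n : ℕ} (hn : 1 ≤ n) : ‖s‖ ∉ I1c p c n := by
  intro hmem
  have hN : (1 : ℝ) < p ^ n := one_lt_pow₀ (by exact_mod_cast hp.one_lt) (by omega)
  have hIoo : ‖s‖ ∈ Ioo ((c : ℝ) / (p ^ n + 1)) (c / (p ^ n - 1)) := by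
    have h := hirr.mem_Ioo_of_mem_Icc (a := c / (p ^ n + 1)) (b := c / (p ^ n - 1))
      (by push_cast; exact hmem)
    push_cast at h
    exact h
  have hlt : ‖(p ^ n) • s‖ < ‖s‖ :=
    calc ‖(p ^ n) • s‖ = ‖(((p : ℝ) ^ n * ‖s‖ : ℝ) : UnitAddCircle)‖ := by
          rw [UnitAddCircle.norm_nsmul_eq_norm_coe_mul]; push_cast; rfl
      _ ≤ |(p : ℝ) ^ n * ‖s‖ - c| := by
          exact_mod_cast UnitAddCircle.norm_coe_le_abs_sub_intCast _ c
      _ < ‖s‖ := abs_mul_sub_lt_of_mem_Ioo hN hIoo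
  exact hlt.not_ge (hmin (hs.pow_nsmul_circleOrbit n))

lemma liminf_plcQty_lt_of_norm_mem_I2c (hp : p.Prime)
    (hs : MapClusterPt s atTop (circleOrbit p x)) (hirr : Irrational ‖s‖) {r : ℚ}
    {c d n : ℕ} (hd : 1 ≤ d) (hmem : ‖s‖ ∈ I2c p r c d n) :
    liminf (plcQty p x) atTop < r := by
  have hd0 : (0 : ℝ) < d := by exact_mod_cast hd
  have hD : (0 : ℝ) < p ^ n * d := by have := hp.pos; positivity
  have hIoo : ‖s‖ ∈ Ioo ((c : ℝ) / (p ^ n * d) - r / d / (p ^ n * d))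
      (c / (p ^ n * d) + r / d / (p ^ n * d)) := by
    have hr : (r : ℝ) / d / (p ^ n * d) = r / (p ^ n * d ^ 2) := by field_simp
    have h := hirr.mem_Ioo_of_mem_Icc
      (a := c / (p ^ n * d) - r / (p ^ n * d ^ 2)) (b := c / (p ^ n * d) + r / (p ^ n * d ^ 2))
      (by push_cast; exact hmem)
    push_cast at h
    rwa [hr]
  calc liminf (plcQty p x) atTop ≤ d * ‖(p ^ n * d) • s‖ :=
        liminf_plcQty_le_of_mapClusterPt hp hs n (by omega)
    _ ≤ d * |(p : ℝ) ^ n * d * ‖s‖ - c| := by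
        rw [UnitAddCircle.norm_nsmul_eq_norm_coe_mul]
        push_cast
        gcongr
        exact_mod_cast UnitAddCircle.norm_coe_le_abs_sub_intCast _ c
    _ < d * (r / d) := by gcongr; exact abs_mul_sub_lt_of_mem_Ioo_div hD hIoo
    _ = r := by field_simp

end ClusterPoint

theorem stmt_9_general (p : ℕ) (hp : p.Prime) (ε : ℝ) (hε0 : 0 < ε)
    (hεrat : ∃ r : ℚ, ε = (r : ℝ))
    (T1 : Finset (ℕ × ℕ)) (hT1 : ∀ cn ∈ T1, 1 ≤ cn.1 ∧ 1 ≤ cn.2)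
    (T2 : Finset (ℕ × ℕ × ℕ)) (hT2 : ∀ cdn ∈ T2, 1 ≤ cdn.2.1)
    (hcov : Set.Icc (0 : ℝ) (1 / 2) ⊆
      (⋃ cn ∈ T1, I1c p cn.1 cn.2) ∪ ⋃ cdn ∈ T2, I2c p ε cdn.1 cdn.2.1 cdn.2.2) :
    ∀ x : ℝ, liminf (plcQty p x) atTop < ε := by
  intro x
  obtain ⟨s, hs, hmin⟩ :=
    exists_mapClusterPt_isMinOn (F := atTop) (circleOrbit p x) continuous_norm
  by_cases hirr : Irrational ‖s‖
  swap
  · obtain ⟨r, hr⟩ := exists_rat_of_not_irrational hirr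
    exact (liminf_plcQty_nonpos_of_norm_eq_ratCast hp hs hr).trans_lt hε0
  have hs_mem : ‖s‖ ∈ Icc (0 : ℝ) (1 / 2) :=
    ⟨norm_nonneg s, by simpa using AddCircle.norm_le_half_period 1 one_ne_zero (x := s)⟩
  obtain ⟨r, rfl⟩ := hεrat
  rcases hcov hs_mem with h₁ | h₂
  · obtain ⟨⟨c, n⟩, hcn, hmem⟩ := mem_iUnion₂.1 h₁
    exact absurd hmem (norm_notMem_I1c_of_isMinOn hp hs hmin hirr c (hT1 _ hcn).2)
  · obtain ⟨⟨c, d, n⟩, hcdn, hmem⟩ := mem_iUnion₂.1 h₂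
    exact liminf_plcQty_lt_of_norm_mem_I2c hp hs hirr (hT2 _ hcdn) hmem

theorem stmt_9 (p : ℕ) (hp : p.Prime) (ε : ℝ) (hε0 : 0 < ε) (hε2 : ε < 1 / 2)
    (hεrat : ∃ r : ℚ, ε = (r : ℝ))
    (T1 : Finset (ℕ × ℕ)) (hT1 : ∀ cn ∈ T1, 1 ≤ cn.1 ∧ 1 ≤ cn.2)
    (T2 : Finset (ℕ × ℕ × ℕ)) (hT2 : ∀ cdn ∈ T2, 1 ≤ cdn.2.1)
    (hcov : Set.Icc (0 : ℝ) (1 / 2) ⊆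
      (⋃ cn ∈ T1, I1c p cn.1 cn.2) ∪ ⋃ cdn ∈ T2, I2c p ε cdn.1 cdn.2.1 cdn.2.2) :
    ∀ x : ℝ, liminf (plcQty p x) atTop < ε :=
  stmt_9_general p hp ε hε0 hεrat T1 hT1 T2 hT2 hcov
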